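/- Let A be a D × D real symmetric positive semidefinite matrix with an expert-block partition, written A = A_bd + Δ, where A_bd is the block-diagonal part (the diagonal blocks of A) and Δ collects the off-diagonal (cross-expert) blocks. Assume Tr(A) > 0, set τ = Tr(A) and ε_Δ = √D ‖Δ‖_F / τ. If ε_Δ ≤ 1 − 1/D, then |log r_e(A) − log r_e(A_bd)| ≤ ε_Δ log(D−1) + h(ε_Δ), where h(ε) = −ε log ε − (1−ε) log(1−ε). -/

import Mathlib

open Matrix

open Classical in
/-- The eigenvalues of a symmetric real matrix (junk value `0` otherwise). -/
noncomputable def eigs {n : Type*} [Fintype n] [DecidableEq n] (A : Matrix n n ℝ) : n → ℝ :=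
  if h : A.IsHermitian then h.eigenvalues else 0

open Classical in
/-- The largest eigenvalue of a symmetric real matrix. -/
noncomputable def maxEig {n : Type*} [Fintype n] [DecidableEq n] (A : Matrix n n ℝ) : ℝ :=
  if h : A.IsHermitian then ⨆ i, h.eigenvalues i else 0

open Classical in
/-- The smallest eigenvalue of a symmetric real matrix. -/
noncomputable def minEig {n : Type*} [Fintype n] [DecidableEq n] (A : Matrix n n ℝ) : ℝ :=
  if h : A.IsHermitian then ⨅ i, h.eigenvalues i else 0

/-- The spectral condition number `κ(A) = λ_max(A) / λ_min(A)`. -/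
noncomputable def condNumberR {n : Type*} [Fintype n] [DecidableEq n]
    (A : Matrix n n ℝ) : ℝ :=
  maxEig A / minEig A

open Classical in
/-- Spectral (Shannon) entropy of the normalized eigenvalue distribution
`p_i = λ_i / ∑_j λ_j` of a symmetric real matrix: `H(p) = -∑ p_i log p_i`. -/
noncomputable def specEntropy {n : Type*} [Fintype n] [DecidableEq n]
    (A : Matrix n n ℝ) : ℝ :=
  if h : A.IsHermitian then
    -(∑ i, (h.eigenvalues i / ∑ j, h.eigenvalues j) *
        Real.log (h.eigenvalues i / ∑ j, h.eigenvalues j))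
  else 0

/-- Spectral-entropy effective rank `r_e(A) = exp(H(p))` (for symmetric positive
semidefinite matrices the singular values equal the eigenvalues). -/
noncomputable def effRank {n : Type*} [Fintype n] [DecidableEq n]
    (A : Matrix n n ℝ) : ℝ :=
  Real.exp (specEntropy A)

/-- Squared Frobenius norm: `‖A‖_F² = Tr(Aᵀ A)`. -/
noncomputable def frobSq {m n : Type*} [Fintype m] [Fintype n] (A : Matrix m n ℝ) : ℝ :=
  Matrix.trace (Aᵀ * A)

/-- Frobenius norm. -/
noncomputable def frobNorm {m n : Type*} [Fintype m] [Fintype n] (A : Matrix m n ℝ) : ℝ :=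
  Real.sqrt (frobSq A)

/-- The binary entropy function `h(ε) = −ε log ε − (1−ε) log(1−ε)`. -/
noncomputable def binEnt (x : ℝ) : ℝ :=
  -(x * Real.log x) - (1 - x) * Real.log (1 - x)


section AuxiliaryLemmas

open Real Finset

-- subadditivity of negMulLog
lemma negMulLog_add_le {x y : ℝ} (hx : 0 ≤ x) (hy : 0 ≤ y) :
    Real.negMulLog (x + y) ≤ Real.negMulLog x + Real.negMulLog y := by
  rcases eq_or_lt_of_le hx with rfl | hx
  · simp
  rcases eq_or_lt_of_le hy with rfl | hy
  · simp
  have hxy : 0 < x + y := by linarith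
  simp only [Real.negMulLog, neg_mul]
  have h1 : x * Real.log x ≤ x * Real.log (x + y) :=
    mul_le_mul_of_nonneg_left (Real.log_le_log hx (by linarith)) hx.le
  have h2 : y * Real.log y ≤ y * Real.log (x + y) :=
    mul_le_mul_of_nonneg_left (Real.log_le_log hy (by linarith)) hy.le
  nlinarith [Real.log_le_log hx (show x ≤ x + y by linarith)]

-- entropy of unnormalized nonneg vector with support in S, total mass t
lemma sum_negMulLog_le {n : Type*} [Fintype n] (w : n → ℝ) (S : Finset n)
    (hw : ∀ i, 0 ≤ w i) (hsupp : ∀ i ∉ S, w i = 0) {t : ℝ}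
    (ht : ∑ i, w i = t) (htpos : 0 < t) :
    ∑ i, Real.negMulLog (w i) ≤ t * Real.log S.card - t * Real.log t := by
  have hScard : 0 < (S.card : ℝ) := by
    by_contra h
    push_neg at h
    have : S = ∅ := by
      have := Finset.card_eq_zero.mp (by exact_mod_cast le_antisymm (by exact_mod_cast h) (Nat.zero_le _))
      exact this
    have : ∑ i, w i = 0 := Finset.sum_eq_zero fun i _ => hsupp i (by simp [this])
    rw [ht] at this; linarith
  have hsum : ∑ i, Real.negMulLog (w i) = ∑ i ∈ S, Real.negMulLog (w i) := by
    rw [← Finset.sum_subset (Finset.subset_univ S)]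
    intro i _ hi; rw [hsupp i hi]; simp
  have htS : ∑ i ∈ S, w i = t := by
    rw [← ht, ← Finset.sum_subset (Finset.subset_univ S)]
    intro i _ hi; exact hsupp i hi
  rw [hsum]
  have key : ∀ i ∈ S, Real.negMulLog (w i) - w i * Real.log S.card + w i * Real.log t
      ≤ t / S.card - w i := by
    intro i _
    rcases eq_or_lt_of_le (hw i) with h0 | h0
    · rw [← h0]; simp; positivity
    · have hlog : Real.log (t / (S.card * w i)) ≤ t / (S.card * w i) - 1 :=
        Real.log_le_sub_one_of_pos (by positivity)
      have hexp : Real.log (t / (S.card * w i)) = Real.log t - Real.log S.card - Real.log (w i) := by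
        rw [Real.log_div (by positivity) (by positivity), Real.log_mul (by positivity) h0.ne']
        ring
      have : w i * Real.log (t / (S.card * w i)) ≤ w i * (t / (S.card * w i) - 1) :=
        mul_le_mul_of_nonneg_left hlog h0.le
      have hdiv : w i * (t / (S.card * w i)) = t / S.card := by
        field_simp
      simp only [Real.negMulLog, neg_mul]
      nlinarith [this, hexp]
  have := Finset.sum_le_sum key
  simp only [Finset.sum_sub_distrib, Finset.sum_add_distrib, ← Finset.sum_mul, htS,
    Finset.sum_const, nsmul_eq_mul] at this
  have hc : (S.card : ℝ) * (t / S.card) = t := by field_simp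
  linarith [this, hc.le, hc.ge]

lemma le_negMulLog_add {s v T : ℝ} (hs : 0 ≤ s) (hv : 0 ≤ v) (hvT : v ≤ T)
    (hT0 : 0 < T) (hT1 : T < 1) :
    Real.negMulLog s + s * Real.log (1 - T) ≤ Real.negMulLog (s + v) := by
  have h1T : 0 < 1 - T := by linarith
  have hcc := Real.concaveOn_negMulLog.2 (Set.mem_Ici.mpr (by positivity : (0:ℝ) ≤ s / (1 - T)))
    (Set.mem_Ici.mpr (by positivity : (0:ℝ) ≤ v / T)) (by linarith : (0:ℝ) ≤ 1 - T)
    hT0.le (by ring)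
  have hx : (1 - T) • (s / (1 - T)) + T • (v / T) = s + v := by
    rw [smul_eq_mul, smul_eq_mul, mul_div_assoc', mul_div_assoc', mul_div_cancel_left₀ s h1T.ne',
      mul_div_cancel_left₀ v hT0.ne']
  rw [hx] at hcc
  have he1 : (1 - T) * Real.negMulLog (s / (1 - T)) = Real.negMulLog s + s * Real.log (1 - T) := by
    have := Real.negMulLog_mul (1 - T) (s / (1 - T))
    rw [show (1 - T) * (s / (1 - T)) = s by field_simp] at this
    have hnm : Real.negMulLog (1 - T) = -((1 - T) * Real.log (1 - T)) := by
      simp only [Real.negMulLog]; ring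
    rw [this, hnm]
    field_simp
    all_goals ring
  have he2 : 0 ≤ T * Real.negMulLog (v / T) := by
    apply mul_nonneg hT0.le
    exact Real.negMulLog_nonneg (by positivity) (by rw [div_le_one hT0]; exact hvT)
  simp only [smul_eq_mul] at hcc
  linarith [he1 ▸ hcc]

lemma fannes_one_sided {D : ℕ} (p q : Fin D → ℝ) (hp : ∀ i, 0 ≤ p i) (hq : ∀ i, 0 ≤ q i)
    (hp1 : ∑ i, p i = 1) (hq1 : ∑ i, q i = 1) {T : ℝ} (hT : ∑ i, |p i - q i| = 2 * T) :
    ∑ i, Real.negMulLog (p i) - ∑ i, Real.negMulLog (q i) ≤ Real.qaryEntropy D T := by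
  classical
  set s : Fin D → ℝ := fun i => min (p i) (q i) with hs_def
  set u : Fin D → ℝ := fun i => p i - s i with hu_def
  set v : Fin D → ℝ := fun i => q i - s i with hv_def
  have hs : ∀ i, 0 ≤ s i := fun i => le_min (hp i) (hq i)
  have hu : ∀ i, 0 ≤ u i := fun i => sub_nonneg.mpr (min_le_left _ _)
  have hv : ∀ i, 0 ≤ v i := fun i => sub_nonneg.mpr (min_le_right _ _)
  have huv : ∀ i, u i + v i = |p i - q i| := by
    intro i
    rcases le_total (p i) (q i) with h | h
    · simp [hu_def, hv_def, hs_def, min_eq_left h, abs_of_nonpos (sub_nonpos.mpr h)]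
    · simp [hu_def, hv_def, hs_def, min_eq_right h, abs_of_nonneg (sub_nonneg.mpr h)]
  have huv0 : ∀ i, u i = 0 ∨ v i = 0 := by
    intro i
    rcases le_total (p i) (q i) with h | h
    · left; simp [hu_def, hs_def, min_eq_left h]
    · right; simp [hv_def, hs_def, min_eq_right h]
  have hsumuv : ∑ i, u i + ∑ i, v i = 2 * T := by
    rw [← Finset.sum_add_distrib, ← hT]
    exact Finset.sum_congr rfl fun i _ => huv i
  have hsumu_v : ∑ i, u i = ∑ i, v i := by
    have : ∑ i, (u i - v i) = 0 := by
      have : ∀ i, u i - v i = p i - q i := fun i => by simp [hu_def, hv_def]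
      simp only [this, Finset.sum_sub_distrib, hp1, hq1, sub_self]
    rw [Finset.sum_sub_distrib] at this
    linarith
  have hsumu : ∑ i, u i = T := by linarith
  have hsumv : ∑ i, v i = T := by linarith
  have hT0 : 0 ≤ T := by
    have : 0 ≤ ∑ i, u i := Finset.sum_nonneg fun i _ => hu i
    linarith
  have hT1 : T ≤ 1 := by
    have h1 : ∀ i, |p i - q i| ≤ p i + q i := fun i => by
      rw [abs_sub_le_iff]; constructor <;> nlinarith [hp i, hq i]
    have := Finset.sum_le_sum fun i (_ : i ∈ Finset.univ) => h1 i
    rw [hT, Finset.sum_add_distrib, hp1, hq1] at this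
    linarith
  have hsums : ∑ i, s i = 1 - T := by
    have : ∀ i, s i = q i - v i := fun i => by simp [hv_def]
    simp only [this, Finset.sum_sub_distrib, hq1, hsumv]
  -- trivial case T = 0
  rcases eq_or_lt_of_le hT0 with rfl | hTpos
  · have hpq : ∀ i, p i = q i := by
      intro i
      have h0 : ∑ i, |p i - q i| = 0 := by rw [hT]; ring
      have := (Finset.sum_eq_zero_iff_of_nonneg (fun i _ => abs_nonneg _)).mp h0 i (Finset.mem_univ i)
      have := abs_eq_zero.mp this
      linarith
    have : ∑ i, Real.negMulLog (p i) = ∑ i, Real.negMulLog (q i) :=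
      Finset.sum_congr rfl fun i _ => by rw [hpq i]
    rw [this, sub_self]
    exact Real.qaryEntropy_nonneg le_rfl zero_le_one
  -- get an index where u vanishes
  obtain ⟨j, hj⟩ : ∃ j, 0 < v j := by
    by_contra h
    push_neg at h
    have : ∑ i, v i ≤ 0 := Finset.sum_nonpos fun i _ => h i
    rw [hsumv] at this; linarith
  have huj : u j = 0 := (huv0 j).resolve_right (by linarith)
  have hD1 : 1 ≤ D := by
    have : (j : Fin D) = j := rfl
    exact Nat.one_le_iff_ne_zero.mpr (by rintro rfl; exact absurd j.2 (by simp))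
  have hcard : (((Finset.univ.erase j).card : ℝ)) = (D : ℝ) - 1 := by
    rw [Finset.card_erase_of_mem (Finset.mem_univ j), Finset.card_univ, Fintype.card_fin]
    push_cast [Nat.cast_sub hD1]
    ring
  have hlogcast : Real.log (((D : ℤ) - 1 : ℤ) : ℝ) = Real.log ((Finset.univ.erase j).card) := by
    rw [hcard]; push_cast; ring_nf
  -- bound on H(u)
  have hu_supp : ∀ i ∉ Finset.univ.erase j, u i = 0 := by
    intro i hi
    have : i = j := by
      by_contra h
      exact hi (Finset.mem_erase.mpr ⟨h, Finset.mem_univ i⟩)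
    rw [this, huj]
  have hHu : ∑ i, Real.negMulLog (u i) ≤ T * Real.log ((D : ℝ) - 1) - T * Real.log T := by
    have := sum_negMulLog_le u (Finset.univ.erase j) hu hu_supp hsumu hTpos
    rwa [hcard] at this
  -- upper bound on H(p)
  have hHp : ∑ i, Real.negMulLog (p i) ≤ ∑ i, Real.negMulLog (s i) + ∑ i, Real.negMulLog (u i) := by
    rw [← Finset.sum_add_distrib]
    apply Finset.sum_le_sum
    intro i _
    have : p i = s i + u i := by simp [hu_def]
    rw [this]
    exact negMulLog_add_le (hs i) (hu i)
  -- lower bound on H(q)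
  rcases eq_or_lt_of_le hT1 with rfl | hTlt1
  · -- T = 1 case
    have hs0 : ∀ i, s i = 0 := by
      intro i
      have h0 : ∑ i, s i = 0 := by rw [hsums]; ring
      exact (Finset.sum_eq_zero_iff_of_nonneg (fun i _ => hs i)).mp h0 i (Finset.mem_univ i)
    have hHq : 0 ≤ ∑ i, Real.negMulLog (q i) := by
      apply Finset.sum_nonneg
      intro i _
      refine Real.negMulLog_nonneg (hq i) ?_
      calc q i ≤ ∑ k, q k := Finset.single_le_sum (fun k _ => hq k) (Finset.mem_univ i)
        _ = 1 := hq1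
    have hHs : ∑ i, Real.negMulLog (s i) = 0 := by
      apply Finset.sum_eq_zero; intro i _; rw [hs0 i]; simp
    have : Real.qaryEntropy D 1 = Real.log ((D : ℝ) - 1) := by
      simp only [Real.qaryEntropy, Real.binEntropy]
      push_cast
      simp [Real.log_inv]
    rw [this]
    have := hHu
    simp only [Real.log_one, mul_zero, sub_zero, one_mul] at this
    linarith
  -- main case 0 < T < 1
  have hHq : ∑ i, Real.negMulLog (s i) + (1 - T) * Real.log (1 - T) ≤
      ∑ i, Real.negMulLog (q i) := by
    have hpt : ∀ i ∈ Finset.univ, Real.negMulLog (s i) + s i * Real.log (1 - T) ≤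
        Real.negMulLog (q i) := by
      intro i _
      have hqi : q i = s i + v i := by simp [hv_def]
      rw [hqi]
      refine le_negMulLog_add (hs i) (hv i) ?_ hTpos hTlt1
      calc v i ≤ ∑ k, v k := Finset.single_le_sum (fun k _ => hv k) (Finset.mem_univ i)
        _ = T := hsumv
    have := Finset.sum_le_sum hpt
    rw [Finset.sum_add_distrib, ← Finset.sum_mul, hsums] at this
    exact this
  have hqe : Real.qaryEntropy D T =
      T * Real.log ((D : ℝ) - 1) + (-(T * Real.log T) - (1 - T) * Real.log (1 - T)) := by
    rw [Real.qaryEntropy, Real.binEntropy, Real.log_inv, Real.log_inv]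
    push_cast
    ring
  rw [hqe]
  linarith

section MatrixAux

variable {n : Type*} [Fintype n] [DecidableEq n]

noncomputable def ovl {A B : Matrix n n ℝ} (hA : A.IsHermitian) (hB : B.IsHermitian) :
    Matrix n n ℝ :=
  star (hA.eigenvectorUnitary : Matrix n n ℝ) * (hB.eigenvectorUnitary : Matrix n n ℝ)

lemma ovl_mul_star {A B : Matrix n n ℝ} (hA : A.IsHermitian) (hB : B.IsHermitian) :
    ovl hA hB * star (ovl hA hB) = 1 := by
  rw [ovl, StarMul.star_mul, star_star, Matrix.mul_assoc, ← Matrix.mul_assoc (hB.eigenvectorUnitary : Matrix n n ℝ)]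
  rw [(Matrix.mem_unitaryGroup_iff).mp (hB.eigenvectorUnitary).2, Matrix.one_mul]
  exact (Matrix.mem_unitaryGroup_iff').mp (hA.eigenvectorUnitary).2

lemma star_ovl_mul {A B : Matrix n n ℝ} (hA : A.IsHermitian) (hB : B.IsHermitian) :
    star (ovl hA hB) * ovl hA hB = 1 := by
  rw [ovl, StarMul.star_mul, star_star, Matrix.mul_assoc, ← Matrix.mul_assoc (hA.eigenvectorUnitary : Matrix n n ℝ)]
  rw [(Matrix.mem_unitaryGroup_iff).mp (hA.eigenvectorUnitary).2, Matrix.one_mul]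
  exact (Matrix.mem_unitaryGroup_iff').mp (hB.eigenvectorUnitary).2

lemma ovl_self {A : Matrix n n ℝ} (hA : A.IsHermitian) : ovl hA hA = 1 := by
  rw [ovl]
  exact (Matrix.mem_unitaryGroup_iff').mp (hA.eigenvectorUnitary).2

lemma trace_mul_eq_sum_ovl {A B : Matrix n n ℝ} (hA : A.IsHermitian) (hB : B.IsHermitian) :
    (A * B).trace = ∑ i, ∑ j, hA.eigenvalues i * hB.eigenvalues j * (ovl hA hB i j)^2 := by
  set U := (hA.eigenvectorUnitary : Matrix n n ℝ)
  set V := (hB.eigenvectorUnitary : Matrix n n ℝ)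
  have hU : U * star U = 1 := (Matrix.mem_unitaryGroup_iff).mp (hA.eigenvectorUnitary).2
  have hU' : star U * U = 1 := (Matrix.mem_unitaryGroup_iff').mp (hA.eigenvectorUnitary).2
  set Dl : Matrix n n ℝ := Matrix.diagonal hA.eigenvalues with hDl
  set Dm : Matrix n n ℝ := Matrix.diagonal hB.eigenvalues with hDm
  have hcomp : ∀ (f : n → ℝ), (RCLike.ofReal ∘ f : n → ℝ) = f := by
    intro f; rw [RCLike.ofReal_real_eq_id, Function.id_comp]
  have hspA : A = U * Dl * star U := by
    have := hA.spectral_theorem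
    rwa [hcomp] at this
  have hspB : B = V * Dm * star V := by
    have := hB.spectral_theorem
    rwa [hcomp] at this
  have key : A * B = U * (Dl * (ovl hA hB) * Dm * star (ovl hA hB)) * star U := by
    rw [ovl, StarMul.star_mul, star_star]
    conv_lhs => rw [hspA, hspB]
    simp only [Matrix.mul_assoc, hU]
    change _ = U * (Dl * (star U * (V * (Dm * (star V * (U * star U)))))); rw [hU, Matrix.mul_one]
  rw [key]
  rw [Matrix.trace_mul_cycle]
  rw [← Matrix.mul_assoc, hU', Matrix.one_mul]
  rw [Matrix.trace]
  have hentry : ∀ i, (Dl * (ovl hA hB) * Dm * star (ovl hA hB)).diag i =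
      ∑ j, hA.eigenvalues i * hB.eigenvalues j * (ovl hA hB i j)^2 := by
    intro i
    simp only [Matrix.diag_apply, Matrix.mul_apply, hDl, hDm, Matrix.diagonal_apply,
      ite_mul, zero_mul, Finset.sum_ite_eq, Finset.mem_univ, if_true, mul_ite, mul_zero,
      Finset.sum_ite_eq', Matrix.star_apply, star_trivial]
    exact Finset.sum_congr rfl fun j _ => by ring
  rw [Finset.sum_congr rfl fun i _ => hentry i]

lemma hoffman_wielandt {A B : Matrix n n ℝ} (hA : A.IsHermitian) (hB : B.IsHermitian) :
    ∃ σ : Equiv.Perm n, ∑ i, (hA.eigenvalues i - hB.eigenvalues (σ i))^2 ≤ frobSq (A - B) := by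
  classical
  set lam := hA.eigenvalues
  set mu := hB.eigenvalues
  set W := ovl hA hB with hW
  set Q : Matrix n n ℝ := Matrix.of (fun i j => (W i j)^2) with hQ
  -- Q is doubly stochastic
  have hrow : ∀ i, ∑ j, Q i j = 1 := by
    intro i
    have h1 := congr_fun (congr_fun (ovl_mul_star hA hB) i) i
    simp only [Matrix.mul_apply, Matrix.one_apply_eq, Matrix.star_apply, star_trivial] at h1
    rw [← h1]
    exact Finset.sum_congr rfl fun j _ => by simp [hQ, hW, sq]
  have hcol : ∀ j, ∑ i, Q i j = 1 := by
    intro j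
    have h1 := congr_fun (congr_fun (star_ovl_mul hA hB) j) j
    simp only [Matrix.mul_apply, Matrix.one_apply_eq, Matrix.star_apply, star_trivial] at h1
    rw [← h1]
    exact Finset.sum_congr rfl fun i _ => by simp [hQ, hW, sq]
  have hQds : Q ∈ doublyStochastic ℝ n := by
    rw [mem_doublyStochastic_iff_sum]
    exact ⟨fun i j => by simp [hQ]; positivity, hrow, hcol⟩
  -- trace (A*A) and (B*B)
  have htrAA : (A * A).trace = ∑ i, lam i ^ 2 := by
    rw [trace_mul_eq_sum_ovl hA hA, ovl_self hA]
    apply Finset.sum_congr rfl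
    intro i _
    rw [Finset.sum_eq_single i]
    · simp [Matrix.one_apply_eq, sq, lam]
    · intro j _ hj
      simp [Matrix.one_apply_ne' hj]
    · simp
  have htrBB : (B * B).trace = ∑ i, mu i ^ 2 := by
    rw [trace_mul_eq_sum_ovl hB hB, ovl_self hB]
    apply Finset.sum_congr rfl
    intro i _
    rw [Finset.sum_eq_single i]
    · simp [Matrix.one_apply_eq, sq, mu]
    · intro j _ hj
      simp [Matrix.one_apply_ne' hj]
    · simp
  -- frobSq expansion
  have hAT : Aᵀ = A := by
    have := hA
    rwa [Matrix.IsHermitian, Matrix.conjTranspose_eq_transpose_of_trivial] at this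
  have hBT : Bᵀ = B := by
    have := hB
    rwa [Matrix.IsHermitian, Matrix.conjTranspose_eq_transpose_of_trivial] at this
  have hfrob : frobSq (A - B) = ∑ i, lam i ^ 2 + ∑ i, mu i ^ 2 - 2 * (A * B).trace := by
    rw [frobSq, Matrix.transpose_sub, hAT, hBT, Matrix.sub_mul, Matrix.mul_sub, Matrix.mul_sub,
      Matrix.trace_sub, Matrix.trace_sub, Matrix.trace_sub, Matrix.trace_mul_comm B A,
      htrAA, htrBB]
    ring
  -- value of the quadratic functional on Q
  have hQval : ∑ i, ∑ j, Q i j * (lam i - mu j)^2 = frobSq (A - B) := by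
    have hexp : ∀ i j, Q i j * (lam i - mu j)^2 =
        Q i j * lam i ^ 2 + Q i j * mu j ^ 2 - 2 * (lam i * mu j * Q i j) := by
      intro i j; ring
    simp only [hexp, Finset.sum_sub_distrib, Finset.sum_add_distrib]
    have h1 : ∑ i, ∑ j, Q i j * lam i ^ 2 = ∑ i, lam i ^ 2 := by
      apply Finset.sum_congr rfl
      intro i _
      rw [← Finset.sum_mul, hrow i, one_mul]
    have h2 : ∑ i, ∑ j, Q i j * mu j ^ 2 = ∑ i, mu i ^ 2 := by
      rw [Finset.sum_comm]
      apply Finset.sum_congr rfl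
      intro j _
      rw [← Finset.sum_mul, hcol j, one_mul]
    have h3 : ∑ i, ∑ j, 2 * (lam i * mu j * Q i j) = 2 * (A * B).trace := by
      rw [trace_mul_eq_sum_ovl hA hB, Finset.mul_sum]
      apply Finset.sum_congr rfl
      intro i _
      rw [Finset.mul_sum]
      apply Finset.sum_congr rfl
      intro j _
      simp only [hQ, Matrix.of_apply, lam, mu, hW]
    rw [h1, h2, h3, hfrob]
  -- Birkhoff
  obtain ⟨w, hw0, hw1, hwQ⟩ := exists_eq_sum_perm_of_mem_doublyStochastic hQds
  set L : Matrix n n ℝ → ℝ := fun M => ∑ i, ∑ j, M i j * (lam i - mu j)^2 with hL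
  have hent : ∀ (σ : Equiv.Perm n) i j, (σ.permMatrix ℝ) i j = if σ i = j then (1:ℝ) else 0 := by
    intro σ i j
    rw [Equiv.Perm.permMatrix, PEquiv.toMatrix_toPEquiv_apply, Pi.single_apply]
    exact if_congr eq_comm rfl rfl
  have hLperm : ∀ σ : Equiv.Perm n, L (σ.permMatrix ℝ) = ∑ i, (lam i - mu (σ i))^2 := by
    intro σ
    apply Finset.sum_congr rfl
    intro i _
    simp only [hent, ite_mul, one_mul, zero_mul, Finset.sum_ite_eq, Finset.mem_univ, if_true]
  have hLlin : ∑ σ : Equiv.Perm n, w σ * L (σ.permMatrix ℝ) = L Q := by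
    conv_rhs => rw [← hwQ]
    simp only [hL, Finset.mul_sum, Matrix.sum_apply, Matrix.smul_apply, smul_eq_mul,
      Finset.sum_mul, mul_assoc]
    rw [Finset.sum_comm]
    apply Finset.sum_congr rfl
    intro i _
    rw [Finset.sum_comm]
  have hex : ∃ σ : Equiv.Perm n, L (σ.permMatrix ℝ) ≤ L Q := by
    by_contra hcon
    push_neg at hcon
    obtain ⟨σ0, hσ0⟩ : ∃ σ : Equiv.Perm n, 0 < w σ := by
      by_contra hw
      push_neg at hw
      have : ∑ σ : Equiv.Perm n, w σ ≤ 0 := Finset.sum_nonpos fun σ _ => hw σ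
      linarith
    have hlt : ∑ σ : Equiv.Perm n, w σ * L Q < ∑ σ : Equiv.Perm n, w σ * L (σ.permMatrix ℝ) := by
      apply Finset.sum_lt_sum
      · intro σ _
        exact mul_le_mul_of_nonneg_left (hcon σ).le (hw0 σ)
      · exact ⟨σ0, Finset.mem_univ σ0, mul_lt_mul_of_pos_left (hcon σ0) hσ0⟩
    rw [← Finset.sum_mul, hw1, one_mul, hLlin] at hlt
    exact lt_irrefl _ hlt
  obtain ⟨σ, hσ⟩ := hex
  refine ⟨σ, ?_⟩
  have hLQ : L Q = frobSq (A - B) := hQval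
  rw [← hLperm σ, ← hLQ]
  exact hσ

lemma trace_eq_sum_eigs {A : Matrix n n ℝ} (hA : A.IsHermitian) :
    A.trace = ∑ i, hA.eigenvalues i := by
  have hcomp : (RCLike.ofReal ∘ hA.eigenvalues : n → ℝ) = hA.eigenvalues := by
    rw [RCLike.ofReal_real_eq_id, Function.id_comp]
  have hsp := hA.spectral_theorem
  rw [hcomp] at hsp
  conv_lhs => rw [show A = (hA.eigenvectorUnitary : Matrix n n ℝ) * diagonal hA.eigenvalues * star (hA.eigenvectorUnitary : Matrix n n ℝ) from hsp]
  rw [Matrix.trace_mul_cycle,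
    (Matrix.mem_unitaryGroup_iff').mp (hA.eigenvectorUnitary).2, Matrix.one_mul,
    Matrix.trace_diagonal]

lemma blockdiag_posSemidef {D E : ℕ} (A : Matrix (Fin D) (Fin D) ℝ) (blk : Fin D → Fin E)
    (hpsd : A.PosSemidef) :
    (Matrix.of fun i j => if blk i = blk j then A i j else 0).PosSemidef := by
  classical
  have hsym : ∀ i j, A j i = A i j := by
    intro i j
    conv_lhs => rw [← hpsd.1]
    simp [Matrix.conjTranspose_apply]
  refine Matrix.PosSemidef.of_dotProduct_mulVec_nonneg ?_ ?_
  · show _ = _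
    ext i j
    simp only [Matrix.conjTranspose_apply, Matrix.of_apply, star_trivial]
    rcases eq_or_ne (blk i) (blk j) with h | h
    · rw [if_pos h.symm, if_pos h, hsym i j]
    · rw [if_neg (Ne.symm h), if_neg h]
  · intro x
    have key : dotProduct (star x) ((Matrix.of fun i j =>
        if blk i = blk j then A i j else 0) *ᵥ x) =
        ∑ e : Fin E, dotProduct (star (fun i => if blk i = e then x i else 0))
          (A *ᵥ (fun i => if blk i = e then x i else 0)) := by
      simp only [dotProduct, Matrix.mulVec, dotProduct, Matrix.of_apply, star_trivial,
        Pi.star_apply]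
      rw [Finset.sum_comm]
      apply Finset.sum_congr rfl
      intro i _
      simp only [Finset.mul_sum, ite_mul, zero_mul, mul_ite, mul_zero]
      rw [Finset.sum_comm]
      apply Finset.sum_congr rfl
      intro j _
      rw [eq_comm, Finset.sum_ite_eq Finset.univ (blk j)]
      simp
    rw [key]
    exact Finset.sum_nonneg fun e _ => hpsd.dotProduct_mulVec_nonneg _

lemma log_effRank {n : Type*} [Fintype n] [DecidableEq n] {A : Matrix n n ℝ}
    (hA : A.IsHermitian) :
    Real.log (effRank A) = ∑ i, Real.negMulLog (hA.eigenvalues i / A.trace) := by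
  rw [effRank, Real.log_exp, specEntropy, dif_pos hA, trace_eq_sum_eigs hA]
  rw [← Finset.sum_neg_distrib]
  exact Finset.sum_congr rfl fun i _ => by rw [Real.negMulLog]; ring



end MatrixAux

end AuxiliaryLemmas

/-- **Effective-rank deviation induced by cross-expert coupling.** Let `A` be a `D × D`
symmetric positive semidefinite matrix with an expert-block partition given by a block
assignment `blk`, and let `A_bd` be its block-diagonal part (the diagonal blocks of `A`,
with the off-diagonal cross-expert blocks `Δ = A − A_bd` zeroed out).  Assume `Tr(A) > 0`
and set `ε_Δ = √D ‖Δ‖_F / Tr(A)`.  If `ε_Δ ≤ 1 − 1/D`, then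
`|log r_e(A) − log r_e(A_bd)| ≤ ε_Δ log(D−1) + h(ε_Δ)`. -/
theorem stmt17 {D E : ℕ} (A Abd : Matrix (Fin D) (Fin D) ℝ)
    (blk : Fin D → Fin E)
    (hAbd : Abd = Matrix.of (fun i j => if blk i = blk j then A i j else 0))
    (hpsd : A.PosSemidef) (htr : 0 < A.trace)
    (ε : ℝ) (hε : ε = Real.sqrt (D : ℝ) * frobNorm (A - Abd) / A.trace)
    (hεle : ε ≤ 1 - 1 / (D : ℝ)) :
    |Real.log (effRank A) - Real.log (effRank Abd)| ≤
      ε * Real.log ((D : ℝ) - 1) + binEnt ε := by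
  classical
  have hA : A.IsHermitian := hpsd.1
  have hDpos : 0 < D := by
    rcases Nat.eq_zero_or_pos D with h | h
    · exfalso
      subst h
      have : A.trace = 0 := by simp [Matrix.trace]
      linarith
    · exact h
  have hAbdpsd : Abd.PosSemidef := hAbd ▸ blockdiag_posSemidef A blk hpsd
  have hAbdH : Abd.IsHermitian := hAbdpsd.1
  have htreq : Abd.trace = A.trace := by
    rw [hAbd, Matrix.trace, Matrix.trace]
    exact Finset.sum_congr rfl fun i _ => by simp [Matrix.diag]
  have hε0 : 0 ≤ ε := by
    rw [hε, frobNorm]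
    positivity
  have hbinEnt : ∀ x : ℝ, binEnt x = Real.binEntropy x := by
    intro x
    rw [binEnt, Real.binEntropy, Real.log_inv, Real.log_inv]
    ring
  rcases lt_or_ge D 2 with hD2 | hD2
  · -- D = 1 case
    have hD1 : D = 1 := by omega
    subst hD1
    have hABeq : Abd = A := by
      rw [hAbd]
      ext i j
      have : i = j := Subsingleton.elim i j
      subst this
      simp
    rw [hABeq, sub_self, abs_zero]
    have hε1 : ε = 0 := by
      apply le_antisymm _ hε0
      simpa using hεle
    rw [hε1, hbinEnt]
    simp
  -- main case: 2 ≤ D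
  set τ := A.trace with hτ
  set lam := hA.eigenvalues with hlam
  set mu := hAbdH.eigenvalues with hmu
  have hsum_lam : ∑ i, lam i = τ := (trace_eq_sum_eigs hA).symm
  have hsum_mu : ∑ i, mu i = τ := by rw [← trace_eq_sum_eigs hAbdH, htreq]
  set p := fun i => lam i / τ with hpdef
  set q := fun i => mu i / τ with hqdef
  have hp : ∀ i, 0 ≤ p i := fun i => div_nonneg (hpsd.eigenvalues_nonneg i) htr.le
  have hq : ∀ i, 0 ≤ q i := fun i => div_nonneg (hAbdpsd.eigenvalues_nonneg i) htr.le
  have hp1 : ∑ i, p i = 1 := by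
    simp only [hpdef]
    rw [← Finset.sum_div, hsum_lam, div_self htr.ne']
  have hq1 : ∑ i, q i = 1 := by
    simp only [hqdef]
    rw [← Finset.sum_div, hsum_mu, div_self htr.ne']
  obtain ⟨σ, hσ⟩ := hoffman_wielandt hA hAbdH
  set q' := fun i => q (σ i) with hq'def
  have hq'0 : ∀ i, 0 ≤ q' i := fun i => hq (σ i)
  have hq'1 : ∑ i, q' i = 1 := (Equiv.sum_comp σ q).trans hq1
  -- ℓ1 bound
  have hl1 : ∑ i, |p i - q' i| ≤ ε := by
    have habs : ∀ i, |p i - q' i| = |lam i - mu (σ i)| / τ := by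
      intro i
      simp only [hpdef, hq'def, hqdef]
      rw [div_sub_div_same, abs_div, abs_of_pos htr]
    have hnn : 0 ≤ ∑ i, |lam i - mu (σ i)| := Finset.sum_nonneg fun i _ => abs_nonneg _
    have hc : (∑ i, |lam i - mu (σ i)|)^2 ≤ (D : ℝ) * ∑ i, (lam i - mu (σ i))^2 := by
      have := sq_sum_le_card_mul_sum_sq (s := Finset.univ)
        (f := fun i => |lam i - mu (σ i)|)
      simpa [sq_abs] using this
    have hc2 : (∑ i, |lam i - mu (σ i)|)^2 ≤ (D : ℝ) * frobSq (A - Abd) := by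
      refine hc.trans ?_
      have : (0:ℝ) ≤ (D:ℝ) := by positivity
      nlinarith [hσ]
    have hkey : ∑ i, |lam i - mu (σ i)| ≤ Real.sqrt D * frobNorm (A - Abd) := by
      calc ∑ i, |lam i - mu (σ i)| = Real.sqrt ((∑ i, |lam i - mu (σ i)|)^2) :=
            (Real.sqrt_sq hnn).symm
        _ ≤ Real.sqrt ((D : ℝ) * frobSq (A - Abd)) := Real.sqrt_le_sqrt hc2
        _ = Real.sqrt D * frobNorm (A - Abd) := by
            rw [Real.sqrt_mul (by positivity), frobNorm]
    calc ∑ i, |p i - q' i| = (∑ i, |lam i - mu (σ i)|) / τ := by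
          rw [Finset.sum_div]
          exact Finset.sum_congr rfl fun i _ => habs i
      _ ≤ Real.sqrt D * frobNorm (A - Abd) / τ := by
          exact (div_le_div_iff_of_pos_right htr).mpr hkey
      _ = ε := hε.symm
  set T := (∑ i, |p i - q' i|) / 2 with hTdef
  have hT : ∑ i, |p i - q' i| = 2 * T := by rw [hTdef]; ring
  have hT0 : 0 ≤ T := by
    rw [hTdef]
    have : 0 ≤ ∑ i, |p i - q' i| := Finset.sum_nonneg fun i _ => abs_nonneg _
    linarith
  have hTε : T ≤ ε := by
    rw [hTdef]
    linarith [hl1, hε0]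
  have hT' : ∑ i, |q' i - p i| = 2 * T := by
    rw [← hT]
    exact Finset.sum_congr rfl fun i _ => abs_sub_comm _ _
  have hf1 := fannes_one_sided p q' hp hq'0 hp1 hq'1 hT
  have hf2 := fannes_one_sided q' p hq'0 hp hq'1 hp1 hT'
  have hHq' : ∑ i, Real.negMulLog (q' i) = ∑ i, Real.negMulLog (q i) :=
    Equiv.sum_comp σ (fun i => Real.negMulLog (q i))
  have hlogA : Real.log (effRank A) = ∑ i, Real.negMulLog (p i) := log_effRank hA
  have hlogB : Real.log (effRank Abd) = ∑ i, Real.negMulLog (q i) := by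
    rw [log_effRank hAbdH]
    exact Finset.sum_congr rfl fun i _ => by rw [hqdef, htreq]
  have habsle : |Real.log (effRank A) - Real.log (effRank Abd)| ≤ Real.qaryEntropy D T := by
    rw [hlogA, hlogB, ← hHq', abs_sub_le_iff]
    exact ⟨hf1, hf2⟩
  have hmono : Real.qaryEntropy D T ≤ Real.qaryEntropy D ε := by
    have hsm := (Real.qaryEntropy_strictMonoOn (q := D) hD2).monotoneOn
    exact hsm ⟨hT0, le_trans hTε hεle⟩ ⟨hε0, hεle⟩ hTε
  refine habsle.trans (hmono.trans ?_)
  rw [Real.qaryEntropy, hbinEnt]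
  have hcast : (((D : ℤ) - 1 : ℤ) : ℝ) = (D : ℝ) - 1 := by push_cast; ring
  rw [hcast]
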